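/- Let A be an associative algebra and σ an algebra automorphism. Define Ad_σ(D) = σ∘D∘σ⁻¹ on the space Der_{σ,σ}(A) of (σ,σ)-derivations, and the bracket [D₁,D₂]_σ = σ∘D₁∘σ⁻¹∘D₂∘σ⁻¹ − σ∘D₂∘σ⁻¹∘D₁∘σ⁻¹. Then (Der_{σ,σ}(A), [·,·]_σ, Ad_σ) is a Hom-Lie algebra: [·,·]_σ is skew-symmetric, Ad_σ is an algebra automorphism with respect to [·,·]_σ, and the Hom-Jacobi identity [[D₁,D₂]_σ, Ad_σ(D₃)]_σ + [[D₂,D₃]_σ, Ad_σ(D₁)]_σ + [[D₃,D₁]_σ, Ad_σ(D₂)]_σ = 0 holds. -/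

import Mathlib

/-- `D` is a `(σ,σ)`-derivation of the associative algebra `A`. -/
def IsSigmaSigmaDerivation {K A : Type*} [Field K] [Ring A] [Algebra K A]
    (σ : A ≃ₐ[K] A) (D : A →ₗ[K] A) : Prop :=
  ∀ a b : A, D (a * b) = D a * σ b + σ a * D b

/-- The bracket `[D₁,D₂]_σ = σ∘D₁∘σ⁻¹∘D₂∘σ⁻¹ − σ∘D₂∘σ⁻¹∘D₁∘σ⁻¹`. -/
def sigmaBracket {K A : Type*} [Field K] [Ring A] [Algebra K A]
    (σ : A ≃ₐ[K] A) (D₁ D₂ : A →ₗ[K] A) : A →ₗ[K] A :=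
  σ.toLinearMap ∘ₗ D₁ ∘ₗ σ.symm.toLinearMap ∘ₗ D₂ ∘ₗ σ.symm.toLinearMap
    - σ.toLinearMap ∘ₗ D₂ ∘ₗ σ.symm.toLinearMap ∘ₗ D₁ ∘ₗ σ.symm.toLinearMap

/-- `Ad_σ(D) = σ ∘ D ∘ σ⁻¹`. -/
def adSigma {K A : Type*} [Field K] [Ring A] [Algebra K A]
    (σ : A ≃ₐ[K] A) (D : A →ₗ[K] A) : A →ₗ[K] A :=
  σ.toLinearMap ∘ₗ D ∘ₗ σ.symm.toLinearMap

/-!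
Right composition with `σ⁻¹` is injective and turns `[D₁, D₂]_σ` into `σ ∘ [E₁, E₂] ∘ σ⁻¹` and
`Ad_σ D` into `σ ∘ E ∘ σ⁻¹`, where `Eᵢ = Dᵢ ∘ σ⁻¹` and `[E₁, E₂]` is the commutator in `End A`.
So `[·,·]_σ` is the Yau twist of the commutator Lie algebra `End A` by the Lie automorphism
`α = σ ∘ (·) ∘ σ⁻¹`, whose Hom-Jacobi identity is `α²` applied to the ordinary Jacobi identity.
-/

theorem lie_lie_add_lie_lie_add_lie_lie {L : Type*} [LieRing L] (x y z : L) :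
    ⁅⁅x, y⁆, z⁆ + ⁅⁅y, z⁆, x⁆ + ⁅⁅z, x⁆, y⁆ = 0 := by
  rw [← lie_skew ⁅x, y⁆ z, ← lie_skew ⁅y, z⁆ x, ← lie_skew ⁅z, x⁆ y, ← neg_add, ← neg_add,
    neg_eq_zero, lie_jacobi z x y]

theorem LieHom.yau_twist_jacobi {R L : Type*} [CommRing R] [LieRing L] [LieAlgebra R L]
    (α : L →ₗ⁅R⁆ L) (x y z : L) :
    α ⁅α ⁅x, y⁆, α z⁆ + α ⁅α ⁅y, z⁆, α x⁆ + α ⁅α ⁅z, x⁆, α y⁆ = 0 := by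
  simp only [← LieHom.map_lie, ← map_add, lie_lie_add_lie_lie_add_lie_lie, map_zero]

section

attribute [local instance] LieRing.ofAssociativeRing

variable {K A : Type*} [Field K] [Ring A] [Algebra K A] {σ : A ≃ₐ[K] A}

theorem IsSigmaSigmaDerivation.adSigma {D : A →ₗ[K] A} (hD : IsSigmaSigmaDerivation σ D) :
    IsSigmaSigmaDerivation σ (adSigma σ D) := by
  intro a b
  simp only [_root_.adSigma, LinearMap.comp_apply, AlgEquiv.toLinearMap_apply, map_mul, hD _ _,
    AlgEquiv.apply_symm_apply, map_add]

theorem IsSigmaSigmaDerivation.sigmaBracket {D₁ D₂ : A →ₗ[K] A}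
    (h₁ : IsSigmaSigmaDerivation σ D₁) (h₂ : IsSigmaSigmaDerivation σ D₂) :
    IsSigmaSigmaDerivation σ (sigmaBracket σ D₁ D₂) := by
  intro a b
  simp only [_root_.sigmaBracket, LinearMap.sub_apply, LinearMap.comp_apply,
    AlgEquiv.toLinearMap_apply, map_mul, h₁ _ _, h₂ _ _, AlgEquiv.apply_symm_apply, map_add]
  noncomm_ring

variable (σ)

theorem sigmaBracket_comm (D₁ D₂ : A →ₗ[K] A) :
    sigmaBracket σ D₁ D₂ = -sigmaBracket σ D₂ D₁ :=
  (neg_sub _ _).symm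

theorem sigmaBracket_comp_symm (D₁ D₂ : A →ₗ[K] A) :
    sigmaBracket σ D₁ D₂ ∘ₗ σ.symm.toLinearMap =
      σ.toLinearEquiv.lieConj ⁅D₁ ∘ₗ σ.symm.toLinearMap, D₂ ∘ₗ σ.symm.toLinearMap⁆ := by
  ext a
  simp [sigmaBracket, LinearEquiv.conj_apply, Ring.lie_def]

theorem adSigma_comp_symm (D : A →ₗ[K] A) :
    adSigma σ D ∘ₗ σ.symm.toLinearMap = σ.toLinearEquiv.lieConj (D ∘ₗ σ.symm.toLinearMap) := by
  ext a
  simp [adSigma, LinearEquiv.conj_apply]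

theorem adSigma_sigmaBracket (D₁ D₂ : A →ₗ[K] A) :
    adSigma σ (sigmaBracket σ D₁ D₂) = sigmaBracket σ (adSigma σ D₁) (adSigma σ D₂) := by
  refine (LinearMap.cancel_right (g := σ.symm.toLinearMap) σ.symm.surjective).1 ?_
  simp only [adSigma_comp_symm, sigmaBracket_comp_symm, LieEquiv.map_lie]

theorem sigmaBracket_homJacobi (D₁ D₂ D₃ : A →ₗ[K] A) :
    sigmaBracket σ (sigmaBracket σ D₁ D₂) (adSigma σ D₃)
      + sigmaBracket σ (sigmaBracket σ D₂ D₃) (adSigma σ D₁)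
      + sigmaBracket σ (sigmaBracket σ D₃ D₁) (adSigma σ D₂) = 0 := by
  refine (LinearMap.cancel_right (g := σ.symm.toLinearMap) σ.symm.surjective).1 ?_
  simp only [LinearMap.add_comp, LinearMap.zero_comp, adSigma_comp_symm, sigmaBracket_comp_symm]
  exact σ.toLinearEquiv.lieConj.toLieHom.yau_twist_jacobi _ _ _

end

theorem derSigmaSigma_homLie {K A : Type*} [Field K] [Ring A] [Algebra K A]
    (σ : A ≃ₐ[K] A) :
    (∀ D : A →ₗ[K] A, IsSigmaSigmaDerivation σ D → IsSigmaSigmaDerivation σ (adSigma σ D)) ∧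
    (∀ D₁ D₂ : A →ₗ[K] A, IsSigmaSigmaDerivation σ D₁ → IsSigmaSigmaDerivation σ D₂ →
      IsSigmaSigmaDerivation σ (sigmaBracket σ D₁ D₂)) ∧
    (∀ D₁ D₂ : A →ₗ[K] A, IsSigmaSigmaDerivation σ D₁ → IsSigmaSigmaDerivation σ D₂ →
      sigmaBracket σ D₁ D₂ = - sigmaBracket σ D₂ D₁) ∧
    (∀ D₁ D₂ : A →ₗ[K] A, IsSigmaSigmaDerivation σ D₁ → IsSigmaSigmaDerivation σ D₂ →
      adSigma σ (sigmaBracket σ D₁ D₂) = sigmaBracket σ (adSigma σ D₁) (adSigma σ D₂)) ∧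
    (∀ D₁ D₂ D₃ : A →ₗ[K] A, IsSigmaSigmaDerivation σ D₁ → IsSigmaSigmaDerivation σ D₂ →
      IsSigmaSigmaDerivation σ D₃ →
      sigmaBracket σ (sigmaBracket σ D₁ D₂) (adSigma σ D₃)
        + sigmaBracket σ (sigmaBracket σ D₂ D₃) (adSigma σ D₁)
        + sigmaBracket σ (sigmaBracket σ D₃ D₁) (adSigma σ D₂) = 0) :=
  ⟨fun _ hD => hD.adSigma,
    fun _ _ h₁ h₂ => h₁.sigmaBracket h₂,
    fun D₁ D₂ _ _ => sigmaBracket_comm σ D₁ D₂,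
    fun D₁ D₂ _ _ => adSigma_sigmaBracket σ D₁ D₂,
    fun D₁ D₂ D₃ _ _ _ => sigmaBracket_homJacobi σ D₁ D₂ D₃⟩
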